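/- arXiv:0903.0483 — 4 statements merged into one kernel-verified Lean document; each statement's English description precedes it below -/
import Mathlib

section
/- Let (Ω, 𝒜, μ) be a measurable space with μ σ-finite, and let π, q : Ω → ℝ be measurable, strictly positive, with ∫ π dμ = 1 and ∫ q dμ = 1. Define α(z, x) = min{1, (π(z)·q(x))/(π(x)·q(z))}. Then the measure on Ω × Ω with density D(w, x) = π(w)·q(x)·α(x, w) + π(x)·q(w)·(1 − α(w, x)) with respect to the product measure μ ⊗ μ equals the product of the measure with density q (in the first coordinate) and the measure with density π (in the second coordinate); that is, D(w, x) = q(w)·π(x) for all (w, x) ∈ Ω × Ω. -/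
open MeasureTheory

/-- Let `μ` be a σ-finite measure on `Ω`, and let `π, q` be measurable, strictly positive
densities with `∫ π dμ = 1` and `∫ q dμ = 1`.  With the independent Metropolis–Hastings
acceptance ratio `α z x = min 1 ((π z * q x) / (π x * q z))`, the joint density
`D (w, x) = π w * q x * α x w + π x * q w * (1 - α w x)` (with respect to `μ ⊗ μ`)
factorizes as the product density `q w * π x` for all `(w, x)`. -/
theorem stmt_2 {Ω : Type*} [MeasurableSpace Ω] (μ : Measure Ω) [SigmaFinite μ]
    (π q : Ω → ℝ) (hπm : Measurable π) (hqm : Measurable q)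
    (hπpos : ∀ x, 0 < π x) (hqpos : ∀ x, 0 < q x)
    (hπint : ∫ x, π x ∂μ = 1) (hqint : ∫ x, q x ∂μ = 1)
    (α : Ω → Ω → ℝ)
    (hα : ∀ z x, α z x = min 1 (π z * q x / (π x * q z)))
    (D : Ω × Ω → ℝ)
    (hD : ∀ w x, D (w, x) = π w * q x * α x w + π x * q w * (1 - α w x)) :
    ∀ w x, D (w, x) = q w * π x := by
  intro w x
  have ha : 0 < π w * q x := mul_pos (hπpos w) (hqpos x)
  have hb : 0 < π x * q w := mul_pos (hπpos x) (hqpos w)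
  rw [hD, hα, hα]
  set a := π w * q x
  set b := π x * q w
  have h1 : a * min 1 (b / a) = min a b := by
    rw [mul_min_of_nonneg _ _ ha.le, mul_one, mul_div_cancel₀ _ ha.ne']
  have h2 : b * min 1 (a / b) = min b a := by
    rw [mul_min_of_nonneg _ _ hb.le, mul_one, mul_div_cancel₀ _ hb.ne']
  have : a * min 1 (b / a) + b * (1 - min 1 (a / b)) = b := by
    rw [mul_sub, mul_one, h1, h2, min_comm b a]; ring
  rw [this]; exact mul_comm _ _
end

section
/- Let (Ω, 𝒜, μ) be a measurable space with μ σ-finite, let π, q : Ω → ℝ be measurable, strictly positive, with ∫ π dμ = 1 and ∫ q dμ = 1, and let a ∈ [0, 1] satisfy q(z) ≥ a·π(z) for all z ∈ Ω (the strong Doeblin condition). Define α(z, x) = min{1, (π(z)·q(x))/(π(x)·q(z))} and the independent Metropolis–Hastings kernel K(x, A) = ∫_A q(z)·α(z, x) dμ(z) + 1_A(x)·(1 − ∫_Ω q(z)·α(z, x) dμ(z)). Then K is minorized by the target: K(x, A) ≥ a·Π(A) for every x ∈ Ω and every measurable A, where Π = π·μ. -/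
open MeasureTheory

/-- Under the strong Doeblin condition `q ≥ a·π` with `a ∈ [0,1]`, the independent
Metropolis–Hastings kernel
`K x A = ∫_A q z * α z x dμ z + 1_A(x) * (1 - ∫_Ω q z * α z x dμ z)`,
with `α z x = min 1 ((π z * q x) / (π x * q z))`, is minorized by the target:
`K x A ≥ a * Π(A)` for every `x` and every measurable `A`, where `Π(A) = ∫_A π dμ`. -/
theorem stmt_6 {Ω : Type*} [MeasurableSpace Ω] (μ : Measure Ω) [SigmaFinite μ]
    (π q : Ω → ℝ) (hπm : Measurable π) (hqm : Measurable q)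
    (hπpos : ∀ x, 0 < π x) (hqpos : ∀ x, 0 < q x)
    (hπint : ∫ x, π x ∂μ = 1) (hqint : ∫ x, q x ∂μ = 1)
    (a : ℝ) (ha : a ∈ Set.Icc (0 : ℝ) 1)
    (hDoeblin : ∀ z, q z ≥ a * π z)
    (α : Ω → Ω → ℝ)
    (hα : ∀ z x, α z x = min 1 (π z * q x / (π x * q z)))
    (K : Ω → Set Ω → ℝ)
    (hK : ∀ x A, K x A =
      (∫ z in A, q z * α z x ∂μ) + A.indicator (fun _ => 1 - ∫ z, q z * α z x ∂μ) x) :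
    ∀ (x : Ω) (A : Set Ω), MeasurableSet A →
      K x A ≥ a * ∫ z in A, π z ∂μ := by
  intro x A hA
  have hqInt : Integrable q μ := by
    by_contra h
    rw [integral_undef h] at hqint
    norm_num at hqint
  have hπInt : Integrable π μ := by
    by_contra h
    rw [integral_undef h] at hπint
    norm_num at hπint
  have hfe : (fun z => q z * α z x) = fun z => q z * min 1 (π z * q x / (π x * q z)) := by
    funext z; rw [hα]
  have hαnn : ∀ z, 0 ≤ α z x := by
    intro z
    rw [hα]
    exact le_min one_pos.le (div_nonneg (mul_nonneg (hπpos z).le (hqpos x).le) (mul_nonneg (hπpos x).le (hqpos z).le))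
  have hαle : ∀ z, α z x ≤ 1 := by
    intro z; rw [hα]; exact min_le_left _ _
  have hf_nonneg : ∀ z, 0 ≤ q z * α z x := fun z =>
    mul_nonneg (hqpos z).le (hαnn z)
  have hf_le : ∀ z, q z * α z x ≤ q z := fun z => by
    nlinarith [hαle z, hαnn z, hqpos z]
  have hf_meas : Measurable (fun z => q z * α z x) := by
    rw [hfe]
    exact hqm.mul (measurable_const.min ((hπm.mul measurable_const).div ((measurable_const.mul hqm))))
  have hf_int : Integrable (fun z => q z * α z x) μ :=
    hqInt.mono' hf_meas.aestronglyMeasurable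
      (Filter.Eventually.of_forall fun z => by
        rw [Real.norm_eq_abs, abs_of_nonneg (hf_nonneg z)]; exact hf_le z)
  have hlow : ∀ z, a * π z ≤ q z * α z x := by
    intro z
    rw [hα]
    have hmin := mul_min_of_nonneg (1 : ℝ) (π z * q x / (π x * q z)) (hqpos z).le
    rw [hmin, mul_one]
    have hr : q z * (π z * q x / (π x * q z)) = π z * q x / π x := by
      have hz := (hqpos z).ne'
      have hx := (hπpos x).ne'
      field_simp
    rw [hr]
    refine le_min (hDoeblin z) ?_
    rw [le_div_iff₀ (hπpos x)]
    nlinarith [hDoeblin x, hπpos z, ha.1]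
  -- lower bound on set integral
  have hset : a * ∫ z in A, π z ∂μ ≤ ∫ z in A, q z * α z x ∂μ := by
    rw [← integral_const_mul]
    apply setIntegral_mono_on ((hπInt.const_mul a).integrableOn) hf_int.integrableOn hA
    intro z _
    exact hlow z
  have hind : 0 ≤ A.indicator (fun _ => 1 - ∫ z, q z * α z x ∂μ) x := by
    apply Set.indicator_nonneg
    intro y _
    have : ∫ z, q z * α z x ∂μ ≤ ∫ z, q z ∂μ :=
      integral_mono hf_int hqInt hf_le
    rw [hqint] at this
    linarith
  rw [hK]
  linarith
end

section
/- Let (Ω, 𝒜, μ) be a measurable space with μ σ-finite and let (Y, ℬ, ν) be a probability space. Let π : Ω → ℝ be a measurable nonnegative density with ∫ π dμ = 1, let b : Y → [0, 1] be measurable, and let v : Y × Ω → ℝ be jointly measurable and nonnegative with ∫_Ω v(y, x) dμ(x) = 1 for every y ∈ Y. Define the marginal density p(x) = ∫_Y ((1 − b(y))·π(x) + b(y)·v(y, x)) dν(y). Then ∫_Ω |p(x) − π(x)| dμ(x) ≤ 2·∫_Y b(y) dν(y). -/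
open MeasureTheory ENNReal

/-- Total variation bound for a history-averaged mixture: with `ν` a probability measure
on the history space `Y`, `b : Y → [0,1]`, and conditional densities
`(1 - b y)·π + b y·v (y, ·)`, the marginal density
`p x = ∫_Y ((1 - b y)·π x + b y·v (y, x)) dν y` satisfies
`∫ |p - π| dμ ≤ 2·∫ b dν`. -/
theorem stmt_11 {Ω Y : Type*} [MeasurableSpace Ω] [MeasurableSpace Y]
    (μ : Measure Ω) [SigmaFinite μ]
    (ν : Measure Y) [IsProbabilityMeasure ν]
    (π : Ω → ℝ) (hπm : Measurable π) (hπnn : ∀ x, 0 ≤ π x) (hπint : ∫ x, π x ∂μ = 1)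
    (b : Y → ℝ) (hbm : Measurable b) (hb : ∀ y, b y ∈ Set.Icc (0 : ℝ) 1)
    (v : Y × Ω → ℝ) (hvm : Measurable v) (hvnn : ∀ y x, 0 ≤ v (y, x))
    (hvint : ∀ y, ∫ x, v (y, x) ∂μ = 1)
    (p : Ω → ℝ)
    (hp : ∀ x, p x = ∫ y, ((1 - b y) * π x + b y * v (y, x)) ∂ν) :
    ∫ x, |p x - π x| ∂μ ≤ 2 * ∫ y, b y ∂ν := by
  have hbnn : ∀ y, 0 ≤ b y := fun y => (hb y).1
  have hb1 : ∀ y, b y ≤ 1 := fun y => (hb y).2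
  -- integrability of π and v(y,·)
  have hπi : Integrable π μ := by
    by_contra h
    rw [integral_undef h] at hπint; norm_num at hπint
  have hvi : ∀ y, Integrable (fun x => v (y, x)) μ := by
    intro y
    by_contra h
    have := hvint y
    rw [integral_undef h] at this; norm_num at this
  -- b is integrable
  have hbi : Integrable b ν :=
    (integrable_const (1 : ℝ)).mono' hbm.aestronglyMeasurable
      (Filter.Eventually.of_forall fun y => by
        rw [Real.norm_eq_abs, abs_of_nonneg (hbnn y)]; exact hb1 y)
  have hbintnn : 0 ≤ ∫ y, b y ∂ν := integral_nonneg hbnn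
  -- lintegral versions
  have hπl : ∫⁻ x, ENNReal.ofReal (π x) ∂μ = 1 := by
    rw [← ofReal_integral_eq_lintegral_ofReal hπi (Filter.Eventually.of_forall hπnn), hπint]
    simp
  have hvl : ∀ y, ∫⁻ x, ENNReal.ofReal (v (y, x)) ∂μ = 1 := by
    intro y
    rw [← ofReal_integral_eq_lintegral_ofReal (hvi y)
      (Filter.Eventually.of_forall fun x => hvnn y x), hvint y]
    simp
  have hbl : ∫⁻ y, ENNReal.ofReal (b y) ∂ν = ENNReal.ofReal (∫ y, b y ∂ν) := by
    rw [ofReal_integral_eq_lintegral_ofReal hbi (Filter.Eventually.of_forall hbnn)]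
  set B : ℝ≥0∞ := ENNReal.ofReal (∫ y, b y ∂ν) with hB
  have hBle : B ≤ 1 := by
    rw [hB]
    refine ENNReal.ofReal_le_one.mpr ?_
    calc ∫ y, b y ∂ν ≤ ∫ y, (1 : ℝ) ∂ν := integral_mono hbi (integrable_const 1) hb1
    _ = 1 := by simp
  -- the dominating kernel g
  set g : Ω → ℝ≥0∞ := fun x => ∫⁻ y, ENNReal.ofReal (b y) * ENNReal.ofReal (v (y, x)) ∂ν
    with hg
  have hmeas_prod : Measurable fun z : Ω × Y =>
      ENNReal.ofReal (b z.2) * ENNReal.ofReal (v (z.2, z.1)) := by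
    refine Measurable.mul (M := ℝ≥0∞) ?_ ?_
    · exact (ENNReal.measurable_ofReal.comp hbm).comp measurable_snd
    · exact ENNReal.measurable_ofReal.comp (hvm.comp (measurable_snd.prodMk measurable_fst))
  have hgint : ∫⁻ x, g x ∂μ = B := by
    rw [hg]
    rw [lintegral_lintegral_swap hmeas_prod.aemeasurable]
    calc ∫⁻ y, ∫⁻ x, ENNReal.ofReal (b y) * ENNReal.ofReal (v (y, x)) ∂μ ∂ν
        = ∫⁻ y, ENNReal.ofReal (b y) * ∫⁻ x, ENNReal.ofReal (v (y, x)) ∂μ ∂ν := by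
          refine lintegral_congr fun y => lintegral_const_mul _ ?_
          exact ENNReal.measurable_ofReal.comp (hvm.comp (measurable_const.prodMk measurable_id))
      _ = ∫⁻ y, ENNReal.ofReal (b y) ∂ν := by
          refine lintegral_congr fun y => by rw [hvl y, mul_one]
      _ = B := hbl
  -- a.e. finiteness of g
  have hgae : ∀ᵐ x ∂μ, g x < ∞ := by
    refine ae_lt_top ?_ ?_
    · exact hmeas_prod.lintegral_prod_right'
    · rw [hgint]; exact (lt_of_le_of_lt hBle one_lt_top).ne
  -- pointwise a.e. bound
  have key : ∀ᵐ x ∂μ, ENNReal.ofReal |p x - π x| ≤ B * ENNReal.ofReal (π x) + g x := by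
    filter_upwards [hgae] with x hx
    -- integrability of the pieces
    have hmvy : Measurable fun y => v (y, x) :=
      hvm.comp (measurable_id.prodMk measurable_const)
    have hbv_i : Integrable (fun y => b y * v (y, x)) ν := by
      refine ⟨(hbm.mul hmvy).aestronglyMeasurable, ?_⟩
      rw [hasFiniteIntegral_iff_ofReal
        (Filter.Eventually.of_forall fun y => mul_nonneg (hbnn y) (hvnn y x))]
      have : ∀ y, ENNReal.ofReal (b y * v (y, x))
          = ENNReal.ofReal (b y) * ENNReal.ofReal (v (y, x)) := fun y =>
        ENNReal.ofReal_mul (hbnn y)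
      simpa [this] using hx
    have h1b_i : Integrable (fun y => (1 - b y) * π x) ν :=
      ((integrable_const (1 : ℝ)).sub hbi).mul_const _
    -- compute p x
    have hpx : p x = (1 - ∫ y, b y ∂ν) * π x + ∫ y, b y * v (y, x) ∂ν := by
      rw [hp x, integral_add h1b_i hbv_i, integral_mul_const,
        integral_sub (integrable_const 1) hbi]
      simp
    have hIv : 0 ≤ ∫ y, b y * v (y, x) ∂ν :=
      integral_nonneg fun y => mul_nonneg (hbnn y) (hvnn y x)
    have habs : |p x - π x| ≤ (∫ y, b y ∂ν) * π x + ∫ y, b y * v (y, x) ∂ν := by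
      rw [hpx]
      have : (1 - ∫ y, b y ∂ν) * π x + (∫ y, b y * v (y, x) ∂ν) - π x
          = (∫ y, b y * v (y, x) ∂ν) - (∫ y, b y ∂ν) * π x := by ring
      rw [this]
      refine (abs_sub _ _).trans ?_
      rw [abs_of_nonneg hIv, abs_of_nonneg (mul_nonneg hbintnn (hπnn x))]
      linarith
    calc ENNReal.ofReal |p x - π x|
        ≤ ENNReal.ofReal ((∫ y, b y ∂ν) * π x + ∫ y, b y * v (y, x) ∂ν) :=
          ENNReal.ofReal_le_ofReal habs
      _ ≤ ENNReal.ofReal ((∫ y, b y ∂ν) * π x)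
          + ENNReal.ofReal (∫ y, b y * v (y, x) ∂ν) := ENNReal.ofReal_add_le
      _ = B * ENNReal.ofReal (π x) + g x := by
          rw [ENNReal.ofReal_mul hbintnn, ofReal_integral_eq_lintegral_ofReal hbv_i
            (Filter.Eventually.of_forall fun y => mul_nonneg (hbnn y) (hvnn y x))]
          congr 1
          refine lintegral_congr fun y => ENNReal.ofReal_mul (hbnn y)
  -- measurability of p
  have hpm : Measurable p := by
    have : p = fun x => ∫ y, ((1 - b y) * π x + b y * v (y, x)) ∂ν := funext hp
    rw [this]
    have hsm : StronglyMeasurable fun z : Ω × Y =>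
        (1 - b z.2) * π z.1 + b z.2 * v (z.2, z.1) := by
      refine Measurable.stronglyMeasurable ?_
      exact (((measurable_const.sub (hbm.comp measurable_snd)).mul
        (hπm.comp measurable_fst))).add
        ((hbm.comp measurable_snd).mul (hvm.comp (measurable_snd.prodMk measurable_fst)))
    exact hsm.integral_prod_right'.measurable
  -- put it together
  have hmain : ∫⁻ x, ENNReal.ofReal |p x - π x| ∂μ ≤ 2 * B := by
    calc ∫⁻ x, ENNReal.ofReal |p x - π x| ∂μ
        ≤ ∫⁻ x, (B * ENNReal.ofReal (π x) + g x) ∂μ := lintegral_mono_ae key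
      _ = B * ∫⁻ x, ENNReal.ofReal (π x) ∂μ + ∫⁻ x, g x ∂μ := by
          rw [lintegral_add_left, lintegral_const_mul]
          · exact ENNReal.measurable_ofReal.comp hπm
          · exact (ENNReal.measurable_ofReal.comp hπm).const_mul B
      _ = 2 * B := by rw [hπl, hgint, mul_one, two_mul]
  have hfin : (2 : ℝ≥0∞) * B ≠ ∞ := by
    refine ENNReal.mul_ne_top (by simp) ?_
    exact (lt_of_le_of_lt hBle one_lt_top).ne
  have heq : ∫ x, |p x - π x| ∂μ = (∫⁻ x, ENNReal.ofReal |p x - π x| ∂μ).toReal :=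
    integral_eq_lintegral_of_nonneg_ae (Filter.Eventually.of_forall fun x => abs_nonneg _)
      ((hpm.sub hπm).abs.aestronglyMeasurable)
  rw [heq]
  calc (∫⁻ x, ENNReal.ofReal |p x - π x| ∂μ).toReal
      ≤ ((2 : ℝ≥0∞) * B).toReal := ENNReal.toReal_mono hfin hmain
    _ = 2 * ∫ y, b y ∂ν := by
        rw [ENNReal.toReal_mul, hB, ENNReal.toReal_ofReal hbintnn]
        simp
end

section
/- Let (Ω, 𝒜) be a measurable space, let Π be a probability measure on Ω, let K be a Markov kernel on Ω such that Π is invariant for K (i.e., the composition Π.bind K = Π) and K(x, A) ≥ a·Π(A) for every x ∈ Ω, every measurable A, and some a ∈ [0, 1]. Then for every probability measure p on Ω, ‖p.bind K − Π‖_TV ≤ (1 − a)·‖p − Π‖_TV, where ‖·‖_TV denotes the total variation norm of a signed measure. -/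
open MeasureTheory ProbabilityTheory
open scoped ENNReal

/-- One step of a Markov kernel preserving a probability measure `p.bind ⇑K` is again a
probability measure. -/
instance bindIsProbabilityMeasure {Ω : Type*} [MeasurableSpace Ω]
    (p : Measure Ω) [IsProbabilityMeasure p]
    (K : Kernel Ω Ω) [IsMarkovKernel K] : IsProbabilityMeasure (p.bind ⇑K) := by
  constructor
  rw [Measure.bind_apply MeasurableSet.univ (Kernel.measurable K).aemeasurable]
  simp

/-- The total variation norm `‖p₁ - p₂‖_TV` of the difference of two finite measures,
as the total variation (in the sense of signed measures) of `p₁ - p₂` evaluated on the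
whole space. -/
noncomputable def tvNorm {Ω : Type*} [MeasurableSpace Ω]
    (p₁ p₂ : Measure Ω) [IsFiniteMeasure p₁] [IsFiniteMeasure p₂] : ℝ≥0∞ :=
  (p₁.toSignedMeasure - p₂.toSignedMeasure).totalVariation Set.univ

lemma jordan_apply {Ω : Type*} [MeasurableSpace Ω]
    (μ ν : Measure Ω) [IsFiniteMeasure μ] [IsFiniteMeasure ν] {A : Set Ω}
    (hA : MeasurableSet A) :
    ((μ.toSignedMeasure - ν.toSignedMeasure).toJordanDecomposition.posPart A).toReal -
      ((μ.toSignedMeasure - ν.toSignedMeasure).toJordanDecomposition.negPart A).toReal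
      = (μ A).toReal - (ν A).toReal := by
  set s := μ.toSignedMeasure - ν.toSignedMeasure with hs
  have h2 : s.toJordanDecomposition.toSignedMeasure A = s A := by
    rw [s.toSignedMeasure_toJordanDecomposition]
  rw [JordanDecomposition.toSignedMeasure, Measure.toSignedMeasure_sub_apply hA] at h2
  simpa [measureReal_def, hs, Measure.toSignedMeasure_sub_apply hA] using h2

/-- Balance equation: `μ + negPart = ν + posPart`. -/
lemma jordan_balance {Ω : Type*} [MeasurableSpace Ω]
    (μ ν : Measure Ω) [IsFiniteMeasure μ] [IsFiniteMeasure ν] :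
    μ + (μ.toSignedMeasure - ν.toSignedMeasure).toJordanDecomposition.negPart
      = ν + (μ.toSignedMeasure - ν.toSignedMeasure).toJordanDecomposition.posPart := by
  ext A hA
  have h := jordan_apply μ ν hA
  rw [Measure.add_apply, Measure.add_apply]
  have h1 : μ A ≠ ∞ := measure_ne_top _ _
  have h2 : ν A ≠ ∞ := measure_ne_top _ _
  have h3 : (μ.toSignedMeasure - ν.toSignedMeasure).toJordanDecomposition.posPart A ≠ ∞ :=
    measure_ne_top _ _
  have h4 : (μ.toSignedMeasure - ν.toSignedMeasure).toJordanDecomposition.negPart A ≠ ∞ :=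
    measure_ne_top _ _
  rw [← ENNReal.toReal_eq_toReal_iff' (by finiteness) (by finiteness)]
  rw [ENNReal.toReal_add h1 h4, ENNReal.toReal_add h2 h3]
  linarith

/-- If the probability measure `T` is invariant for the Markov kernel `K` and `K` is
minorized by `T`, i.e. `K x A ≥ a·T(A)` for all `x` and measurable `A` with `a ∈ [0,1]`,
then one step of `K` contracts the total variation distance to `T` by the factor `1 - a`:
`‖p.bind K - T‖_TV ≤ (1 - a)·‖p - T‖_TV` for every probability measure `p`. -/
theorem stmt_12 {Ω : Type*} [MeasurableSpace Ω]
    (T : Measure Ω) [IsProbabilityMeasure T]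
    (K : Kernel Ω Ω) [IsMarkovKernel K]
    (hinv : T.bind ⇑K = T)
    (a : ℝ) (ha : a ∈ Set.Icc (0 : ℝ) 1)
    (hminor : ∀ (x : Ω) (A : Set Ω), MeasurableSet A → ENNReal.ofReal a * T A ≤ K x A) :
    ∀ (p : Measure Ω) [IsProbabilityMeasure p],
      tvNorm (p.bind ⇑K) T ≤ ENNReal.ofReal (1 - a) * tvNorm p T := by
  intro p _
  set j := (p.toSignedMeasure - T.toSignedMeasure).toJordanDecomposition with hj
  set j' := ((p.bind ⇑K).toSignedMeasure - T.toSignedMeasure).toJordanDecomposition with hj'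
  -- equal masses
  have hmass : j.posPart Set.univ = j.negPart Set.univ := by
    have h := jordan_apply p T MeasurableSet.univ
    simp only [measure_univ, ← hj] at h
    rw [← ENNReal.toReal_eq_toReal_iff' (measure_ne_top _ _) (measure_ne_top _ _)]
    linarith
  have hmass' : j'.posPart Set.univ = j'.negPart Set.univ := by
    have h := jordan_apply (p.bind ⇑K) T MeasurableSet.univ
    simp only [measure_univ, ← hj'] at h
    rw [← ENNReal.toReal_eq_toReal_iff' (measure_ne_top _ _) (measure_ne_top _ _)]
    linarith
  -- tvNorm as sums
  have htv : tvNorm p T = j.posPart Set.univ + j.negPart Set.univ := by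
    simp [tvNorm, SignedMeasure.totalVariation, ← hj]
  have htv' : tvNorm (p.bind ⇑K) T = j'.posPart Set.univ + j'.negPart Set.univ := by
    simp [tvNorm, SignedMeasure.totalVariation, ← hj']
  -- Hahn set for j'
  obtain ⟨E, hE, hE1, hE2⟩ := j'.mutuallySingular
  -- mass of the new difference, realized on Eᶜ
  have hbal' := jordan_balance (p.bind ⇑K) T
  simp only [← hj'] at hbal'
  have hM'eq : T Eᶜ + j'.posPart Set.univ = (p.bind ⇑K) Eᶜ := by
    have h := Measure.ext_iff.mp hbal' Eᶜ hE.compl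
    rw [Measure.add_apply, Measure.add_apply, hE2, add_zero] at h
    have hposE : j'.posPart Eᶜ = j'.posPart Set.univ := by
      have h0 := measure_add_measure_compl (μ := j'.posPart) hE
      rw [hE1, zero_add] at h0
      exact h0
    rw [hposE] at h
    exact h.symm
  -- integral identity from balance for j
  have hbal := jordan_balance p T
  simp only [← hj] at hbal
  have hint : (p.bind ⇑K) Eᶜ + ∫⁻ x, K x Eᶜ ∂j.negPart
      = T Eᶜ + ∫⁻ x, K x Eᶜ ∂j.posPart := by
    have h1 : ∫⁻ x, K x Eᶜ ∂(p + j.negPart) = ∫⁻ x, K x Eᶜ ∂(T + j.posPart) := by rw [hbal]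
    rw [lintegral_add_measure, lintegral_add_measure] at h1
    have h2 : ∫⁻ x, K x Eᶜ ∂T = T Eᶜ := by
      conv_rhs => rw [← hinv]
      rw [Measure.bind_apply hE.compl (Kernel.measurable K).aemeasurable]
    have h3 : (p.bind ⇑K) Eᶜ = ∫⁻ x, K x Eᶜ ∂p :=
      Measure.bind_apply hE.compl (Kernel.measurable K).aemeasurable
    rw [h3, ← h2]
    exact h1
  -- bounds on the integrals
  have hIneg : ENNReal.ofReal a * T Eᶜ * j.negPart Set.univ ≤ ∫⁻ x, K x Eᶜ ∂j.negPart := by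
    calc ENNReal.ofReal a * T Eᶜ * j.negPart Set.univ
        = ∫⁻ _, ENNReal.ofReal a * T Eᶜ ∂j.negPart := by rw [lintegral_const]
      _ ≤ ∫⁻ x, K x Eᶜ ∂j.negPart := lintegral_mono fun x => hminor x Eᶜ hE.compl
  have hIpos : ∫⁻ x, K x Eᶜ ∂j.posPart
      ≤ (1 - ENNReal.ofReal a * T E) * j.posPart Set.univ := by
    have hb : ∀ x, K x Eᶜ ≤ 1 - ENNReal.ofReal a * T E := by
      intro x
      have h1 : K x Eᶜ + K x E = 1 := by
        rw [add_comm, measure_add_measure_compl hE, measure_univ]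
      calc K x Eᶜ = 1 - K x E := ENNReal.eq_sub_of_add_eq (measure_ne_top _ _) h1
        _ ≤ 1 - ENNReal.ofReal a * T E := tsub_le_tsub_left (hminor x E hE) 1
    calc ∫⁻ x, K x Eᶜ ∂j.posPart ≤ ∫⁻ _, 1 - ENNReal.ofReal a * T E ∂j.posPart :=
          lintegral_mono hb
      _ = (1 - ENNReal.ofReal a * T E) * j.posPart Set.univ := lintegral_const _
  have hIneg_fin : ∫⁻ x, K x Eᶜ ∂j.negPart ≠ ∞ := by
    have h0 : ∫⁻ x, K x Eᶜ ∂j.negPart ≤ ∫⁻ _, 1 ∂j.negPart :=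
      lintegral_mono fun x => prob_le_one
    rw [lintegral_const] at h0
    exact ne_top_of_le_ne_top (by finiteness) h0
  have hfactor : 1 - ENNReal.ofReal a * T E
      ≤ ENNReal.ofReal (1 - a) + ENNReal.ofReal a * T Eᶜ := by
    rw [tsub_le_iff_right]
    have h0 : ENNReal.ofReal (1 - a) + ENNReal.ofReal a * T Eᶜ + ENNReal.ofReal a * T E
        = ENNReal.ofReal (1 - a) + ENNReal.ofReal a * (T Eᶜ + T E) := by ring
    rw [h0]
    have hTE : T Eᶜ + T E = 1 := by
      rw [add_comm, measure_add_measure_compl hE, measure_univ]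
    rw [hTE, mul_one, ← ENNReal.ofReal_add (by linarith [ha.2]) ha.1]
    simp
  -- key inequality
  have hkey : j'.posPart Set.univ ≤ ENNReal.ofReal (1 - a) * j.negPart Set.univ := by
    have hchain : j'.posPart Set.univ + T Eᶜ + ∫⁻ x, K x Eᶜ ∂j.negPart
        ≤ ENNReal.ofReal (1 - a) * j.negPart Set.univ + T Eᶜ
          + ∫⁻ x, K x Eᶜ ∂j.negPart := by
      calc j'.posPart Set.univ + T Eᶜ + ∫⁻ x, K x Eᶜ ∂j.negPart
          = (p.bind ⇑K) Eᶜ + ∫⁻ x, K x Eᶜ ∂j.negPart := by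
            rw [add_comm (j'.posPart Set.univ) (T Eᶜ), hM'eq]
        _ = T Eᶜ + ∫⁻ x, K x Eᶜ ∂j.posPart := hint
        _ ≤ T Eᶜ + (1 - ENNReal.ofReal a * T E) * j.posPart Set.univ :=
            add_le_add_right hIpos _
        _ = T Eᶜ + (1 - ENNReal.ofReal a * T E) * j.negPart Set.univ := by rw [hmass]
        _ ≤ T Eᶜ + (ENNReal.ofReal (1 - a) + ENNReal.ofReal a * T Eᶜ)
              * j.negPart Set.univ :=
            add_le_add_right (mul_le_mul_left hfactor _) _
        _ = T Eᶜ + (ENNReal.ofReal (1 - a) * j.negPart Set.univ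
              + ENNReal.ofReal a * T Eᶜ * j.negPart Set.univ) := by ring
        _ ≤ T Eᶜ + (ENNReal.ofReal (1 - a) * j.negPart Set.univ
              + ∫⁻ x, K x Eᶜ ∂j.negPart) := add_le_add_right (add_le_add_right hIneg _) _
        _ = ENNReal.ofReal (1 - a) * j.negPart Set.univ + T Eᶜ
              + ∫⁻ x, K x Eᶜ ∂j.negPart := by ring
    have h1 := (ENNReal.add_le_add_iff_right hIneg_fin).mp hchain
    exact (ENNReal.add_le_add_iff_right (measure_ne_top _ _)).mp h1
  rw [htv, htv']
  calc j'.posPart Set.univ + j'.negPart Set.univ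
      = j'.posPart Set.univ + j'.posPart Set.univ := by rw [← hmass']
    _ ≤ ENNReal.ofReal (1 - a) * j.negPart Set.univ
        + ENNReal.ofReal (1 - a) * j.negPart Set.univ := add_le_add hkey hkey
    _ = ENNReal.ofReal (1 - a) * (j.posPart Set.univ + j.negPart Set.univ) := by
        rw [hmass]; ring
end
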